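/- For fixed u,v ∈ (0,1), the map θ ↦ C_θ(u,v) is monotonically nondecreasing in θ on [1,∞). -/
import Mathlib

noncomputable def gumbelCopula (θ u v : ℝ) : ℝ :=
  Real.exp (-((-Real.log u) ^ θ + (-Real.log v) ^ θ) ^ (1 / θ))

/-- For fixed `u, v ∈ (0,1)`, the Gumbel copula is nondecreasing in `θ` on `[1,∞)`. -/
theorem gumbelCopula_monotone_in_theta
    (u v : ℝ) (hu : u ∈ Set.Ioo (0 : ℝ) 1) (hv : v ∈ Set.Ioo (0 : ℝ) 1) :
    MonotoneOn (fun θ => gumbelCopula θ u v) (Set.Ici (1 : ℝ)) := by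
  intro p hp q hq hpq
  have ha : 0 ≤ -Real.log u := by
    have := Real.log_neg hu.1 hu.2; linarith
  have hb : 0 ≤ -Real.log v := by
    have := Real.log_neg hv.1 hv.2; linarith
  set a : NNReal := ⟨-Real.log u, ha⟩
  set b : NNReal := ⟨-Real.log v, hb⟩
  have key := NNReal.rpow_add_rpow_le a b (lt_of_lt_of_le one_pos hp) hpq
  have key' : ((a ^ q + b ^ q) ^ (1 / q) : ℝ) ≤ ((a ^ p + b ^ p) ^ (1 / p) : ℝ) := by
    exact_mod_cast key
  simp only [gumbelCopula, Real.exp_le_exp, neg_le_neg_iff]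
  exact key'
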